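/- arXiv:1910.12815 — 2 statements merged into one kernel-verified Lean document; each statement's English description precedes it below -/
import Mathlib

section
/- For one-dimensional probability measures μ, ν on ℝ with finite p-th moments (p ≥ 1), W_p^p(μ, ν) = ∫₀¹ |F_μ^{-1}(t) − F_ν^{-1}(t)|^p dt, where F_μ^{-1} and F_ν^{-1} are the quantile functions (generalized inverses of the CDFs) of μ and ν. -/
open MeasureTheory ENNReal Metric

noncomputable section

/-- `γ` is a coupling of `μ` and `ν`. -/
def IsCoupling {E F : Type*} [MeasurableSpace E] [MeasurableSpace F]
    (γ : Measure (E × F)) (μ : Measure E) (ν : Measure F) : Prop :=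
  γ.map Prod.fst = μ ∧ γ.map Prod.snd = ν

/-- The `p`-th power of the Wasserstein distance of order `p`:
infimum over couplings of the `p`-cost. -/
def WpCost (p : ℝ) {E : Type*} [NormedAddCommGroup E] [MeasurableSpace E]
    (μ ν : Measure E) : ℝ≥0∞ :=
  ⨅ (γ : Measure (E × E)) (_ : IsCoupling γ μ ν),
    ∫⁻ z, (‖z.1 - z.2‖₊ : ℝ≥0∞) ^ p ∂γ

/-- The Wasserstein distance of order `p`. -/
def Wp (p : ℝ) {E : Type*} [NormedAddCommGroup E] [MeasurableSpace E]
    (μ ν : Measure E) : ℝ≥0∞ := WpCost p μ ν ^ (1 / p)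

abbrev Euc (d : ℕ) := EuclideanSpace ℝ (Fin d)

/-- Linear form associated with a direction `u`. -/
def projDir {d : ℕ} (u : Euc d) : Euc d → ℝ := fun y => inner ℝ u y

/-- The `p`-th power of the Sliced-Wasserstein distance w.r.t. a measure `σu` on the sphere. -/
def SWpCost (p : ℝ) {d : ℕ} (σu : Measure (sphere (0 : Euc d) 1))
    (μ ν : Measure (Euc d)) : ℝ≥0∞ :=
  ∫⁻ u, WpCost p (μ.map (projDir (u : Euc d))) (ν.map (projDir (u : Euc d))) ∂σu

/-- Sliced-Wasserstein distance of order `p`. -/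
def SWp (p : ℝ) {d : ℕ} (σu : Measure (sphere (0 : Euc d) 1))
    (μ ν : Measure (Euc d)) : ℝ≥0∞ := SWpCost p σu μ ν ^ (1 / p)

/-- Centered isotropic Gaussian `N(0, σ² I_d)` on `ℝᵈ`. -/
def isoGaussian (d : ℕ) (σ : ℝ) : Measure (Euc d) :=
  (Measure.pi fun _ : Fin d => ProbabilityTheory.gaussianReal 0 (Real.toNNReal (σ ^ 2))).map
    (EuclideanSpace.equiv (Fin d) ℝ).symm

/-- Empirical measure of `m` points. -/
def empirical {E : Type*} [MeasurableSpace E] {m : ℕ} (z : Fin m → E) : Measure E :=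
  (m : ℝ≥0∞)⁻¹ • ∑ i, Measure.dirac (z i)

/-- Quantile function (generalized inverse CDF). -/
def quantile (μ : Measure ℝ) (t : ℝ) : ℝ := sInf {x | t ≤ ProbabilityTheory.cdf μ x}

/-- Finite `p`-th moment. -/
def FiniteMomentP (p : ℝ) {E : Type*} [NormedAddCommGroup E] [MeasurableSpace E]
    (μ : Measure E) : Prop := ∫⁻ y, (‖y‖₊ : ℝ≥0∞) ^ p ∂μ < ∞

/-- Rotation invariance of a measure on the unit sphere. -/
def SphereInvariant {d : ℕ} (σu : Measure (sphere (0 : Euc d) 1)) : Prop :=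
  ∀ T : Euc d ≃ₗᵢ[ℝ] Euc d,
    σu.map (fun (u : sphere (0 : Euc d) 1) => (⟨T u, by
      rw [mem_sphere_zero_iff_norm, T.norm_map, ← mem_sphere_zero_iff_norm]
      exact u.2⟩ : sphere (0 : Euc d) 1)) = σu

/-!
Write `|w|^p = ∫ ((w - r)₊ + (-w - r)₊) dρ(r)`, where `ρ` is the Stieltjes measure of the right
derivative `r ↦ p r₊^(p-1)` of `r ↦ r₊^p`. For a coupling `γ` of `μ` and `ν`, the layer-cake
formula gives `∫ (x - y - r)₊ dγ = ∫ γ {y ≤ v - r, v < x} dv`, and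
`γ {y ≤ a, b < x} ≥ ν(-∞, a] - μ(-∞, b]`. The coupling `t ↦ (F_μ⁻¹ t, F_ν⁻¹ t)` of Lebesgue
measure on `(0, 1)` attains all these bounds at once, so it is optimal, and its cost is the
right-hand side.
-/

open ProbabilityTheory Set Filter

theorem lintegral_ofReal_sub_eq_lintegral_measure {α : Type*} [MeasurableSpace α]
    (γ : Measure α) [SFinite γ] {f g : α → ℝ} (hf : Measurable f) (hg : Measurable g) :
    ∫⁻ a, ENNReal.ofReal (f a - g a) ∂γ = ∫⁻ v, γ {a | g a ≤ v ∧ v < f a} := by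
  set S := {q : α × ℝ | g q.1 ≤ q.2 ∧ q.2 < f q.1}
  have hS : MeasurableSet S :=
    (measurableSet_le (hg.comp measurable_fst) measurable_snd).inter
      (measurableSet_lt measurable_snd (hf.comp measurable_fst))
  calc ∫⁻ a, ENNReal.ofReal (f a - g a) ∂γ
      = ∫⁻ a, (∫⁻ v : ℝ, S.indicator 1 (a, v)) ∂γ := by
        refine lintegral_congr fun a => ?_
        rw [← Real.volume_Ico]
        exact (lintegral_indicator_one measurableSet_Ico).symm
    _ = ∫⁻ v : ℝ, ∫⁻ a, S.indicator 1 (a, v) ∂γ :=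
        lintegral_lintegral_swap (f := fun a v => S.indicator 1 (a, v))
          (measurable_const.indicator hS).aemeasurable
    _ = ∫⁻ v, γ {a | g a ≤ v ∧ v < f a} :=
        lintegral_congr fun v => lintegral_indicator_one (hS.preimage measurable_prodMk_right)

/-- A Stieltjes function rather than a density because for `p = 1` it jumps at `0`. -/
def rpowDerivStieltjes {p : ℝ} (hp : 1 ≤ p) : StieltjesFunction ℝ where
  toFun r := if r < 0 then 0 else p * r ^ (p - 1)
  mono' a b hab := by
    have hp0 : 0 ≤ p := by linarith
    by_cases hb : b < 0
    · simp [hb, hab.trans_lt hb]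
    by_cases ha : a < 0
    · simp only [ha, hb, if_true, if_false]
      exact mul_nonneg hp0 (Real.rpow_nonneg (not_lt.mp hb) _)
    · simp only [ha, hb, if_false]
      gcongr
      exact not_lt.mp ha
  right_continuous' x := by
    rcases lt_or_ge x 0 with hx | hx
    · exact (continuousAt_const.congr (eventually_of_mem (Iio_mem_nhds hx)
        fun y hy => (if_pos hy).symm)).continuousWithinAt
    · refine ((continuousAt_const.mul (Real.continuousAt_rpow_const x (p - 1)
        (Or.inr (by linarith)))).continuousWithinAt).congr (fun y hy => ?_) (if_neg hx.not_gt)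
      exact if_neg (hx.trans hy).not_gt

section RpowDerivStieltjes

variable {p : ℝ} (hp : 1 ≤ p)

theorem rpowDerivStieltjes_measure_Iic (v : ℝ) :
    (rpowDerivStieltjes hp).measure (Iic v) = ENNReal.ofReal (rpowDerivStieltjes hp v) := by
  have hbot : Tendsto (rpowDerivStieltjes hp) atBot (nhds 0) :=
    tendsto_const_nhds.congr' ((eventually_lt_atBot 0).mono fun r hr => (if_pos hr).symm)
  rw [StieltjesFunction.measure_Iic _ hbot, sub_zero]

theorem setLIntegral_Iio_rpowDerivStieltjes (w : ℝ) :
    ∫⁻ v in Iio w, ENNReal.ofReal (rpowDerivStieltjes hp v)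
      = ENNReal.ofReal (max w 0 ^ p) := by
  have hp0 : 0 < p := by linarith
  have hind : ∀ v, ENNReal.ofReal (rpowDerivStieltjes hp v)
      = (Ici 0).indicator (fun v => ENNReal.ofReal (p * v ^ (p - 1))) v := by
    intro v
    by_cases hv : v < 0
    · simp [rpowDerivStieltjes, hv]
    · simp [rpowDerivStieltjes, hv, not_lt.mp hv]
  simp_rw [hind]
  rw [lintegral_indicator measurableSet_Ici, Measure.restrict_restrict measurableSet_Ici,
    Ici_inter_Iio]
  rcases le_or_gt w 0 with hw | hw
  · rw [Ico_eq_empty hw.not_gt, Measure.restrict_empty, lintegral_zero_measure, max_eq_right hw,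
      Real.zero_rpow hp0.ne', ENNReal.ofReal_zero]
  have hint : IntegrableOn (fun v => p * v ^ (p - 1)) (Ioc 0 w) := by
    rw [← intervalIntegrable_iff_integrableOn_Ioc_of_le hw.le]
    exact (intervalIntegral.intervalIntegrable_rpow' (by linarith)).const_mul p
  have hnonneg : 0 ≤ᵐ[volume.restrict (Ioc 0 w)] fun v => p * v ^ (p - 1) :=
    (ae_restrict_mem measurableSet_Ioc).mono fun v hv =>
      mul_nonneg hp0.le (Real.rpow_nonneg hv.1.le _)
  rw [setLIntegral_congr Ico_ae_eq_Ioc, ← ofReal_integral_eq_lintegral_ofReal hint hnonneg,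
    ← intervalIntegral.integral_of_le hw.le, intervalIntegral.integral_const_mul,
    integral_rpow (Or.inl (by linarith)), sub_add_cancel, Real.zero_rpow hp0.ne', max_eq_left hw.le]
  field_simp
  simp

theorem lintegral_ofReal_sub_rpowDerivStieltjes (w : ℝ) :
    ∫⁻ r, ENNReal.ofReal (w - r) ∂(rpowDerivStieltjes hp).measure
      = ENNReal.ofReal (max w 0 ^ p) := by
  rw [lintegral_ofReal_sub_eq_lintegral_measure _ measurable_const measurable_id',
    ← setLIntegral_Iio_rpowDerivStieltjes hp, ← lintegral_indicator measurableSet_Iio]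
  refine lintegral_congr fun v => ?_
  by_cases hv : v < w
  · simp [hv, ← rpowDerivStieltjes_measure_Iic hp, Iic]
  · simp [hv]

theorem nnnorm_rpow_eq_lintegral_rpowDerivStieltjes (w : ℝ) :
    (‖w‖₊ : ℝ≥0∞) ^ p = ∫⁻ r, (ENNReal.ofReal (w - r) + ENNReal.ofReal (-w - r))
      ∂(rpowDerivStieltjes hp).measure := by
  have hp0 : 0 < p := by linarith
  rw [lintegral_add_left (by fun_prop), lintegral_ofReal_sub_rpowDerivStieltjes,
    lintegral_ofReal_sub_rpowDerivStieltjes, ← enorm_eq_nnnorm, Real.enorm_eq_ofReal_abs,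
    ENNReal.ofReal_rpow_of_nonneg (abs_nonneg w) hp0.le]
  rcases le_total w 0 with h | h
  · simp [h, abs_of_nonpos h, Real.zero_rpow hp0.ne']
  · simp [h, abs_of_nonneg h, Real.zero_rpow hp0.ne']

theorem lintegral_nnnorm_sub_rpow_eq (γ : Measure (ℝ × ℝ)) [SFinite γ] :
    ∫⁻ z, (‖z.1 - z.2‖₊ : ℝ≥0∞) ^ p ∂γ
      = ∫⁻ r, (∫⁻ z, ENNReal.ofReal (z.1 - z.2 - r) ∂γ
          + ∫⁻ z, ENNReal.ofReal (z.1 - z.2 - r) ∂γ.map Prod.swap)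
        ∂(rpowDerivStieltjes hp).measure := by
  simp_rw [nnnorm_rpow_eq_lintegral_rpowDerivStieltjes hp]
  rw [lintegral_lintegral_swap (by fun_prop)]
  refine lintegral_congr fun r => ?_
  rw [lintegral_add_left (by fun_prop), lintegral_map (by fun_prop) measurable_swap]
  simp

end RpowDerivStieltjes

theorem IsCoupling.swap {μ ν : Measure ℝ} {γ : Measure (ℝ × ℝ)} (hγ : IsCoupling γ μ ν) :
    IsCoupling (γ.map Prod.swap) ν μ := by
  rw [IsCoupling, Measure.map_map measurable_fst measurable_swap,
    Measure.map_map measurable_snd measurable_swap]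
  exact ⟨hγ.2, hγ.1⟩

theorem IsCoupling.isFiniteMeasure {μ ν : Measure ℝ} [IsFiniteMeasure μ] {γ : Measure (ℝ × ℝ)}
    (hγ : IsCoupling γ μ ν) : IsFiniteMeasure γ := by
  have h := measure_lt_top μ univ
  rw [← hγ.1, Measure.map_apply measurable_fst MeasurableSet.univ, preimage_univ] at h
  exact ⟨h⟩

theorem IsCoupling.sub_le_measure_quadrant {μ ν : Measure ℝ} {γ : Measure (ℝ × ℝ)}
    (hγ : IsCoupling γ μ ν) (a b : ℝ) :
    ν (Iic a) - μ (Iic b) ≤ γ {z | z.2 ≤ a ∧ b < z.1} := by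
  rw [← hγ.1, ← hγ.2, Measure.map_apply measurable_fst measurableSet_Iic,
    Measure.map_apply measurable_snd measurableSet_Iic, tsub_le_iff_right]
  refine (measure_mono fun z hz => ?_).trans (measure_union_le _ _)
  by_cases h : b < z.1
  · exact Or.inl ⟨hz, h⟩
  · exact Or.inr (not_lt.mp h)

section Quantile

variable {μ : Measure ℝ}

theorem quantile_le_iff {t : ℝ} (ht : t ∈ Ioo 0 1) {x : ℝ} :
    quantile μ t ≤ x ↔ t ≤ cdf μ x := by
  have hbdd : BddBelow {x | t ≤ cdf μ x} := by
    obtain ⟨x₀, hx₀⟩ := ((tendsto_cdf_atBot μ).eventually_lt_const ht.1).exists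
    refine ⟨x₀, fun y hy => ?_⟩
    by_contra! hyx
    exact (hy.trans (monotone_cdf μ hyx.le)).not_gt hx₀
  have hne : {x | t ≤ cdf μ x}.Nonempty :=
    ((tendsto_cdf_atTop μ).eventually_const_lt ht.2).exists.imp fun _ => le_of_lt
  refine ⟨fun h => ?_, fun h => csInf_le hbdd h⟩
  have hright : ∀ z, x < z → t ≤ cdf μ z := fun z hz => by
    obtain ⟨y, hy, hyz⟩ := (csInf_lt_iff hbdd hne).mp (h.trans_lt hz)
    exact hy.trans (monotone_cdf μ hyz.le)
  exact ge_of_tendsto (((cdf μ).right_continuous x).mono Ioi_subset_Ici_self)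
    (eventually_nhdsWithin_of_forall hright)

theorem lt_quantile_iff {t : ℝ} (ht : t ∈ Ioo 0 1) {x : ℝ} :
    x < quantile μ t ↔ cdf μ x < t :=
  lt_iff_lt_of_le_iff_le (quantile_le_iff ht)

theorem monotoneOn_quantile : MonotoneOn (quantile μ) (Ioo 0 1) :=
  fun _ ha _ hb hab => (quantile_le_iff ha).mpr (hab.trans ((quantile_le_iff hb).mp le_rfl))

theorem aemeasurable_quantile : AEMeasurable (quantile μ) (volume.restrict (Ioo 0 1)) :=
  aemeasurable_restrict_of_monotoneOn measurableSet_Ioo monotoneOn_quantile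

end Quantile

theorem volume_Ioo_zero_one_inter_Ioc {a b : ℝ} (ha : 0 ≤ a) (hb : b ≤ 1) :
    volume (Ioo 0 1 ∩ Ioc a b) = ENNReal.ofReal (b - a) := by
  refine le_antisymm ((measure_mono inter_subset_right).trans Real.volume_Ioc.le) ?_
  rw [← Real.volume_Ioo]
  exact measure_mono fun t ht => ⟨⟨ha.trans_lt ht.1, ht.2.trans_le hb⟩, ht.1, ht.2.le⟩

theorem map_quantile (μ : Measure ℝ) [IsProbabilityMeasure μ] :
    (volume.restrict (Ioo 0 1)).map (quantile μ) = μ := by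
  refine Measure.ext_of_Iic _ _ fun x => ?_
  rw [Measure.map_apply_of_aemeasurable aemeasurable_quantile measurableSet_Iic,
    Measure.restrict_apply' measurableSet_Ioo]
  have hset : quantile μ ⁻¹' Iic x ∩ Ioo 0 1 = Ioo 0 1 ∩ Ioc 0 (cdf μ x) := by
    ext t
    by_cases ht : t ∈ Ioo 0 1
    · simp [ht, quantile_le_iff ht, ht.1]
    · simp [ht]
  rw [hset, volume_Ioo_zero_one_inter_Ioc le_rfl (cdf_le_one μ x), sub_zero, ofReal_cdf]

def quantileCoupling (μ ν : Measure ℝ) : Measure (ℝ × ℝ) :=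
  (volume.restrict (Ioo 0 1)).map fun t => (quantile μ t, quantile ν t)

section QuantileCoupling

variable (μ ν : Measure ℝ)

instance : IsFiniteMeasure (quantileCoupling μ ν) := by
  unfold quantileCoupling
  infer_instance

theorem aemeasurable_quantile_prod :
    AEMeasurable (fun t => (quantile μ t, quantile ν t)) (volume.restrict (Ioo 0 1)) :=
  aemeasurable_quantile.prodMk aemeasurable_quantile

theorem quantileCoupling_map_swap :
    (quantileCoupling μ ν).map Prod.swap = quantileCoupling ν μ := by
  rw [quantileCoupling, AEMeasurable.map_map_of_aemeasurable measurable_swap.aemeasurable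
    (aemeasurable_quantile_prod μ ν)]
  rfl

theorem lintegral_nnnorm_sub_rpow_quantileCoupling {p : ℝ} (hp : 0 ≤ p) :
    ∫⁻ z, (‖z.1 - z.2‖₊ : ℝ≥0∞) ^ p ∂quantileCoupling μ ν
      = ∫⁻ t in Ioo 0 1, ENNReal.ofReal (|quantile μ t - quantile ν t| ^ p) := by
  rw [quantileCoupling, lintegral_map' (by fun_prop) (aemeasurable_quantile_prod μ ν)]
  refine lintegral_congr fun t => ?_
  rw [← enorm_eq_nnnorm, Real.enorm_eq_ofReal_abs, ENNReal.ofReal_rpow_of_nonneg (abs_nonneg _) hp]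

variable [IsProbabilityMeasure μ] [IsProbabilityMeasure ν]

theorem isCoupling_quantileCoupling : IsCoupling (quantileCoupling μ ν) μ ν := by
  rw [IsCoupling, quantileCoupling,
    AEMeasurable.map_map_of_aemeasurable measurable_fst.aemeasurable
      (aemeasurable_quantile_prod μ ν),
    AEMeasurable.map_map_of_aemeasurable measurable_snd.aemeasurable
      (aemeasurable_quantile_prod μ ν)]
  exact ⟨map_quantile μ, map_quantile ν⟩

theorem quantileCoupling_quadrant (a b : ℝ) :
    quantileCoupling μ ν {z | z.2 ≤ a ∧ b < z.1} = ν (Iic a) - μ (Iic b) := by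
  have hmeas : MeasurableSet {z : ℝ × ℝ | z.2 ≤ a ∧ b < z.1} :=
    (measurableSet_le measurable_snd measurable_const).inter
      (measurableSet_lt measurable_const measurable_fst)
  rw [quantileCoupling, Measure.map_apply_of_aemeasurable (aemeasurable_quantile_prod μ ν) hmeas,
    Measure.restrict_apply' measurableSet_Ioo]
  have hset : (fun t => (quantile μ t, quantile ν t)) ⁻¹' {z | z.2 ≤ a ∧ b < z.1} ∩ Ioo 0 1
      = Ioo 0 1 ∩ Ioc (cdf μ b) (cdf ν a) := by
    ext t
    by_cases ht : t ∈ Ioo 0 1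
    · simp [ht, quantile_le_iff ht, lt_quantile_iff ht, and_comm]
    · simp [ht]
  rw [hset, volume_Ioo_zero_one_inter_Ioc (cdf_nonneg μ b) (cdf_le_one ν a),
    ENNReal.ofReal_sub _ (cdf_nonneg μ b), ofReal_cdf, ofReal_cdf]

theorem lintegral_ofReal_sub_quantileCoupling_le {γ : Measure (ℝ × ℝ)} [SFinite γ]
    (hγ : IsCoupling γ μ ν) (r : ℝ) :
    ∫⁻ z, ENNReal.ofReal (z.1 - z.2 - r) ∂quantileCoupling μ ν
      ≤ ∫⁻ z, ENNReal.ofReal (z.1 - z.2 - r) ∂γ := by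
  simp_rw [sub_sub]
  rw [lintegral_ofReal_sub_eq_lintegral_measure _ measurable_fst (by fun_prop),
    lintegral_ofReal_sub_eq_lintegral_measure _ measurable_fst (by fun_prop)]
  refine lintegral_mono fun v => ?_
  simp only [← le_sub_iff_add_le]
  rw [quantileCoupling_quadrant]
  exact hγ.sub_le_measure_quadrant _ _

theorem lintegral_nnnorm_sub_rpow_quantileCoupling_le {p : ℝ} (hp : 1 ≤ p)
    {γ : Measure (ℝ × ℝ)} (hγ : IsCoupling γ μ ν) :
    ∫⁻ z, (‖z.1 - z.2‖₊ : ℝ≥0∞) ^ p ∂quantileCoupling μ ν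
      ≤ ∫⁻ z, (‖z.1 - z.2‖₊ : ℝ≥0∞) ^ p ∂γ := by
  have := hγ.isFiniteMeasure
  rw [lintegral_nnnorm_sub_rpow_eq hp, lintegral_nnnorm_sub_rpow_eq hp,
    quantileCoupling_map_swap]
  refine lintegral_mono fun r => add_le_add ?_ ?_
  · exact lintegral_ofReal_sub_quantileCoupling_le μ ν hγ r
  · exact lintegral_ofReal_sub_quantileCoupling_le ν μ hγ.swap r

end QuantileCoupling

theorem stmt9_general (p : ℝ) (hp : 1 ≤ p) (μ ν : Measure ℝ)
    [IsProbabilityMeasure μ] [IsProbabilityMeasure ν] :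
    WpCost p μ ν
      = ∫⁻ t in Set.Ioo (0 : ℝ) 1, ENNReal.ofReal (|quantile μ t - quantile ν t| ^ p) := by
  rw [WpCost, ← lintegral_nnnorm_sub_rpow_quantileCoupling μ ν (by linarith)]
  refine le_antisymm (iInf₂_le (quantileCoupling μ ν) (isCoupling_quantileCoupling μ ν)) ?_
  exact le_iInf₂ fun γ hγ => lintegral_nnnorm_sub_rpow_quantileCoupling_le μ ν hp hγ

/-- quantile formula for the 1D Wasserstein distance:
W_p^p(μ, ν) = ∫₀¹ |F_μ⁻¹(t) − F_ν⁻¹(t)|^p dt. -/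
theorem stmt9 (p : ℝ) (hp : 1 ≤ p) (μ ν : Measure ℝ)
    [IsProbabilityMeasure μ] [IsProbabilityMeasure ν]
    (hμ : FiniteMomentP p μ) (hν : FiniteMomentP p ν) :
    WpCost p μ ν
      = ∫⁻ t in Set.Ioo (0 : ℝ) 1, ENNReal.ofReal (|quantile μ t - quantile ν t| ^ p) :=
  stmt9_general p hp μ ν
end
end

section
/- Let ε > 0 be fixed, and let D be a nonnegative function on pairs of datasets such that D(y_{1:n}, z_{1:m(n)}) → D_∞(θ) almost surely as n → ∞ when z_{1:m(n)} are i.i.d. from μ_θ (with m(n)/n → α > 0), where D_∞(θ) is a deterministic function of θ. Assume π({θ : D_∞(θ) = ε}) = 0 and π({θ : D_∞(θ) ≤ ε}) > 0. Then the ABC posterior π^ε_{y_{1:n}}(A) = [∫_A π(dθ) P(D(y_{1:n}, Z_{1:m(n)}) ≤ ε | θ)] / [∫_Θ π(dθ) P(D(y_{1:n}, Z_{1:m(n)}) ≤ ε | θ)] converges, as n → ∞, to the restriction of π to {θ : D_∞(θ) ≤ ε}, i.e., to π(A ∩ {D_∞ ≤ ε}) / π({D_∞ ≤ ε}), by dominated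 convergence. -/
open MeasureTheory ENNReal Metric

noncomputable section

/-!
Off the π-null boundary `{D_∞ = ε}`, almost sure convergence of `D n θ` to `D_∞ θ` makes the
event `{D n θ ≤ ε}` eventually coincide with the deterministic event `{D_∞ θ ≤ ε}`, so the
acceptance probability tends to `1{D_∞ θ ≤ ε}`. Bounded convergence then gives the limits
`π (A ∩ {D_∞ ≤ ε})` and `π {D_∞ ≤ ε} > 0` of numerator and denominator.
-/

section

open Filter Topology Set

theorem Filter.Tendsto.eventually_le_const_iff {ι α : Type*} [LinearOrder α] [TopologicalSpace α]
    [OrderClosedTopology α] {l : Filter ι} {u : ι → α} {c ε : α} (h : Tendsto u l (𝓝 c))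
    (hc : c ≠ ε) : ∀ᶠ i in l, (u i ≤ ε ↔ c ≤ ε) := by
  rcases hc.lt_or_gt with hlt | hgt
  · filter_upwards [h.eventually_lt_const hlt] with i hi
    simp only [hi.le, hlt.le]
  · filter_upwards [h.eventually_const_lt hgt] with i hi
    simp only [not_le.2 hi, not_le.2 hgt]

theorem MeasureTheory.tendsto_measure_setOf_le_of_ae_tendsto {ι Ω α : Type*}
    [MeasurableSpace Ω] [LinearOrder α] [TopologicalSpace α] [OrderClosedTopology α]
    [MeasurableSpace α] [OpensMeasurableSpace α] {l : Filter ι} [l.IsCountablyGenerated]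
    (μ : Measure Ω) [IsProbabilityMeasure μ] {f : ι → Ω → α} (hf : ∀ i, Measurable (f i))
    {c ε : α} (hc : c ≠ ε) (hlim : ∀ᵐ ω ∂μ, Tendsto (f · ω) l (𝓝 c)) :
    Tendsto (fun i => μ {ω | f i ω ≤ ε}) l (𝓝 ((Iic ε).indicator 1 c)) := by
  have h_const_event := tendsto_measure_of_ae_tendsto_indicator_of_isFiniteMeasure l
    (A := {_ω | c ≤ ε}) (As := fun i => {ω | f i ω ≤ ε}) (MeasurableSet.const _)
    (fun i => hf i measurableSet_Iic)
    (by filter_upwards [hlim] with ω hω using hω.eventually_le_const_iff hc)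
  by_cases hcε : c ≤ ε <;> simpa [hcε] using h_const_event

theorem MeasureTheory.tendsto_setLIntegral_of_ae_tendsto_indicator_one {ι α : Type*}
    [MeasurableSpace α] {l : Filter ι} [l.IsCountablyGenerated] (μ : Measure α)
    [IsFiniteMeasure μ] {g : ι → α → ℝ≥0∞} (hg : ∀ i, Measurable (g i))
    (hg_le : ∀ i x, g i x ≤ 1) {S : Set α} (hS : MeasurableSet S)
    (hlim : ∀ᵐ x ∂μ, Tendsto (g · x) l (𝓝 (S.indicator 1 x))) (B : Set α) :
    Tendsto (fun i => ∫⁻ x in B, g i x ∂μ) l (𝓝 (μ (B ∩ S))) := by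
  rw [← inter_comm, ← Measure.restrict_apply hS, ← lintegral_indicator_one hS]
  exact tendsto_lintegral_filter_of_dominated_convergence 1 (.of_forall hg)
    (.of_forall fun i => .of_forall (hg_le i)) (by simp) (ae_restrict_of_ae hlim)

end

theorem stmt14_general {Θ : Type*} [MeasurableSpace Θ] {Ω : Type*} [MeasurableSpace Ω]
    (π : Measure Θ) [IsProbabilityMeasure π] (P : Measure Ω) [IsProbabilityMeasure P]
    (D : ℕ → Θ → Ω → ℝ) (hDmeas : ∀ n, Measurable (Function.uncurry (D n)))
    (Dlim : Θ → ℝ) (hDlim : Measurable Dlim)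
    (hconv : ∀ θ, ∀ᵐ ω ∂P, Filter.Tendsto (fun n => D n θ ω) Filter.atTop (nhds (Dlim θ)))
    (ε : ℝ)
    (hboundary : π {θ | Dlim θ = ε} = 0)
    (hpos : 0 < π {θ | Dlim θ ≤ ε}) :
    ∀ A : Set Θ, MeasurableSet A →
      Filter.Tendsto
        (fun n => (∫⁻ θ in A, P {ω | D n θ ω ≤ ε} ∂π) / ∫⁻ θ, P {ω | D n θ ω ≤ ε} ∂π)
        Filter.atTop
        (nhds (π (A ∩ {θ | Dlim θ ≤ ε}) / π {θ | Dlim θ ≤ ε})) := by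
  intro A _
  have h_acc_meas (n : ℕ) : Measurable fun θ => P {ω | D n θ ω ≤ ε} :=
    measurable_measure_prodMk_left (hDmeas n measurableSet_Iic)
  have h_acc_lim : ∀ᵐ θ ∂π, Filter.Tendsto (fun n => P {ω | D n θ ω ≤ ε}) Filter.atTop
      (nhds ({θ | Dlim θ ≤ ε}.indicator 1 θ)) := by
    have h_off_boundary : ∀ᵐ θ ∂π, Dlim θ ≠ ε := measure_eq_zero_iff_ae_notMem.1 hboundary
    filter_upwards [h_off_boundary] with θ hθ
    exact tendsto_measure_setOf_le_of_ae_tendsto P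
      (fun n => (hDmeas n).comp measurable_prodMk_left) hθ (hconv θ)
  have h_evidence (B : Set Θ) : Filter.Tendsto (fun n => ∫⁻ θ in B, P {ω | D n θ ω ≤ ε} ∂π)
      Filter.atTop (nhds (π (B ∩ {θ | Dlim θ ≤ ε}))) :=
    tendsto_setLIntegral_of_ae_tendsto_indicator_one π h_acc_meas (fun _ _ => prob_le_one)
      (hDlim measurableSet_Iic) h_acc_lim B
  have h_total := h_evidence Set.univ
  rw [Measure.restrict_univ, Set.univ_inter] at h_total
  exact ENNReal.Tendsto.div (h_evidence A) (.inr hpos.ne') h_total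
    (.inl (measure_ne_top π _))

/-- large-n limit of the ABC posterior: it converges to the restriction of the
prior π to the region {θ : D_∞(θ) ≤ ε}. -/
theorem stmt14 {Θ : Type*} [MeasurableSpace Θ] {Ω : Type*} [MeasurableSpace Ω]
    (π : Measure Θ) [IsProbabilityMeasure π] (P : Measure Ω) [IsProbabilityMeasure P]
    (D : ℕ → Θ → Ω → ℝ) (hDmeas : ∀ n, Measurable (Function.uncurry (D n)))
    (hDnonneg : ∀ n θ ω, 0 ≤ D n θ ω)
    (Dlim : Θ → ℝ) (hDlim : Measurable Dlim)
    (hconv : ∀ θ, ∀ᵐ ω ∂P, Filter.Tendsto (fun n => D n θ ω) Filter.atTop (nhds (Dlim θ)))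
    (ε : ℝ) (hε : 0 < ε)
    (hboundary : π {θ | Dlim θ = ε} = 0)
    (hpos : 0 < π {θ | Dlim θ ≤ ε}) :
    ∀ A : Set Θ, MeasurableSet A →
      Filter.Tendsto
        (fun n => (∫⁻ θ in A, P {ω | D n θ ω ≤ ε} ∂π) / ∫⁻ θ, P {ω | D n θ ω ≤ ε} ∂π)
        Filter.atTop
        (nhds (π (A ∩ {θ | Dlim θ ≤ ε}) / π {θ | Dlim θ ≤ ε})) :=
  stmt14_general π P D hDmeas Dlim hDlim hconv ε hboundary hpos
end
end
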